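/- In a Cauchon graph G_B^{m×n}, let i be a row vertex, j a column vertex, and P, Q two directed paths from i to j. If R is a directed path from a row vertex i' to a column vertex j' with i' > i, and R is vertex-disjoint from P or vertex-disjoint from Q, then R is vertex-disjoint from U(P,Q). -/

import Mathlib

noncomputable section

namespace QM

/-- 1-indexed rank of a coordinate of `[m] × [n]` in the lexicographic order. -/
def idx {m n : ℕ} (p : Fin m × Fin n) : ℕ := p.1.1 * n + p.2.1 + 1

/-- `q` is not a root of unity. -/
def NotRootOfUnity {K : Type*} [Field K] (q : K) : Prop := ∀ k : ℕ, 0 < k → q ^ k ≠ 1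

/-- `B` is (the set of black squares of) a Cauchon diagram. -/
def IsCauchon {m n : ℕ} (B : Set (Fin m × Fin n)) : Prop :=
  ∀ p ∈ B, (∀ j' : Fin n, j' < p.2 → (p.1, j') ∈ B) ∨ (∀ i' : Fin m, i' < p.1 → (i', p.2) ∈ B)

/-! ### The quantum torus, presented by generators and relations -/

/-- Generators of the quantum torus: a generator `t_{i,j}` and its inverse for each coordinate. -/
inductive TGen (m n : ℕ) : Type
  | pos : Fin m → Fin n → TGen m n
  | neg : Fin m → Fin n → TGen m n

variable (K : Type*) [Field K]

def Tp (m n : ℕ) (i : Fin m) (j : Fin n) : FreeAlgebra K (TGen m n) :=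
  FreeAlgebra.ι K (TGen.pos i j)

def Tm (m n : ℕ) (i : Fin m) (j : Fin n) : FreeAlgebra K (TGen m n) :=
  FreeAlgebra.ι K (TGen.neg i j)

/-- The defining relations of the `m × n` quantum torus. -/
inductive TorusRel (m n : ℕ) (q : K) :
    FreeAlgebra K (TGen m n) → FreeAlgebra K (TGen m n) → Prop
  | mulInv : ∀ (i : Fin m) (j : Fin n), TorusRel m n q (Tp K m n i j * Tm K m n i j) 1
  | invMul : ∀ (i : Fin m) (j : Fin n), TorusRel m n q (Tm K m n i j * Tp K m n i j) 1
  | rowRel : ∀ {i : Fin m} {j l : Fin n}, j < l →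
      TorusRel m n q (Tp K m n i j * Tp K m n i l) (q • (Tp K m n i l * Tp K m n i j))
  | colRel : ∀ {i k : Fin m} {j : Fin n}, i < k →
      TorusRel m n q (Tp K m n i j * Tp K m n k j) (q • (Tp K m n k j * Tp K m n i j))
  | commRel : ∀ {i k : Fin m} {j l : Fin n}, i ≠ k → j ≠ l →
      TorusRel m n q (Tp K m n i j * Tp K m n k l) (Tp K m n k l * Tp K m n i j)

/-- The `m × n` quantum torus `O_q((K^*)^{m×n})`. -/
abbrev QTorus (m n : ℕ) (q : K) := RingQuot (TorusRel K m n q)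

/-- The generator `t_{i,j}` of the quantum torus. -/
def tq (m n : ℕ) (q : K) (i : Fin m) (j : Fin n) : QTorus K m n q :=
  RingQuot.mkAlgHom K (TorusRel K m n q) (Tp K m n i j)

/-- The inverse generator `t_{i,j}⁻¹` of the quantum torus. -/
def tqi (m n : ℕ) (q : K) (i : Fin m) (j : Fin n) : QTorus K m n q :=
  RingQuot.mkAlgHom K (TorusRel K m n q) (Tm K m n i j)

/-- The list of all coordinates of `[m] × [n]` in increasing lexicographic order. -/
def coordList (m n : ℕ) : List (Fin m × Fin n) :=
  (List.finRange m).flatMap fun i => (List.finRange n).map fun j => (i, j)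

/-- `t_{i,j}^z` for an integer `z`. -/
def tzpow (m n : ℕ) (q : K) (i : Fin m) (j : Fin n) (z : ℤ) : QTorus K m n q :=
  if 0 ≤ z then tq K m n q i j ^ z.toNat else tqi K m n q i j ^ (-z).toNat

/-- The lexicographic term `t^N` of the quantum torus, `N` an integer matrix. -/
def tpow (m n : ℕ) (q : K) (N : Matrix (Fin m) (Fin n) ℤ) : QTorus K m n q :=
  ((coordList m n).map fun p => tzpow K m n q p.1 p.2 (N p.1 p.2)).prod

/-! ### Cauchon graphs and paths -/

/-- Vertices of a Cauchon graph: white vertices, row vertices and column vertices. -/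
inductive V (m n : ℕ) : Type
  | white : Fin m → Fin n → V m n
  | row : Fin m → V m n
  | col : Fin n → V m n
deriving DecidableEq

/-- Directed edges of the Cauchon graph `G_B^{m×n}`. -/
inductive Edge {m n : ℕ} (B : Set (Fin m × Fin n)) : V m n → V m n → Prop
  | horiz : ∀ {i : Fin m} {j j' : Fin n}, j' < j → (i, j) ∉ B → (i, j') ∉ B →
      (∀ j'' : Fin n, j' < j'' → j'' < j → (i, j'') ∈ B) →
      Edge B (V.white i j) (V.white i j')
  | vert : ∀ {i i' : Fin m} {j : Fin n}, i < i' → (i, j) ∉ B → (i', j) ∉ B →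
      (∀ i'' : Fin m, i < i'' → i'' < i' → (i'', j) ∈ B) →
      Edge B (V.white i j) (V.white i' j)
  | fromRow : ∀ {i : Fin m} {j : Fin n}, (i, j) ∉ B →
      (∀ j' : Fin n, j < j' → (i, j') ∈ B) → Edge B (V.row i) (V.white i j)
  | toCol : ∀ {i : Fin m} {j : Fin n}, (i, j) ∉ B →
      (∀ i' : Fin m, i < i' → (i', j) ∈ B) → Edge B (V.white i j) (V.col j)

/-- The weight of an edge of a Cauchon graph, as an element of the quantum torus. -/
def ew (m n : ℕ) (q : K) : V m n → V m n → QTorus K m n q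
  | V.white i j, V.white i' j' => if i = i' then tqi K m n q i j * tq K m n q i j' else 1
  | V.row _, V.white i j => tq K m n q i j
  | _, _ => 1

/-- The weight of a list of vertices: ordered product of the weights of consecutive edges. -/
def wtList (m n : ℕ) (q : K) : List (V m n) → QTorus K m n q
  | [] => 1
  | [_] => 1
  | a :: b :: rest => ew K m n q a b * wtList m n q (b :: rest)

/-- A (directed, vertex-disjoint) path in the Cauchon graph `G_B^{m×n}`. -/
structure CPath (m n : ℕ) (B : Set (Fin m × Fin n)) : Type where
  verts : List (V m n)
  nonempty : verts ≠ []
  chain : verts.Chain' (Edge B)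
  nodup : verts.Nodup

/-- The starting vertex of a path. -/
def CPath.first {m n : ℕ} {B : Set (Fin m × Fin n)} (P : CPath m n B) : V m n :=
  P.verts.head P.nonempty

/-- The ending vertex of a path. -/
def CPath.last {m n : ℕ} {B : Set (Fin m × Fin n)} (P : CPath m n B) : V m n :=
  P.verts.getLast P.nonempty

/-- The weight `w(P)` of a path. -/
def CPath.wt {m n : ℕ} (q : K) {B : Set (Fin m × Fin n)} (P : CPath m n B) : QTorus K m n q :=
  wtList K m n q P.verts

/-- Whether an (oriented) edge between these two vertices is vertical. -/
def isVertV {m n : ℕ} : V m n → V m n → Bool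
  | V.white _ j, V.white _ j' => j == j'
  | V.white _ _, V.col _ => true
  | _, _ => false

/-- Whether an (oriented) edge between these two vertices is horizontal. -/
def isHorizV {m n : ℕ} : V m n → V m n → Bool
  | V.white i _, V.white i' _ => i == i'
  | V.row _, V.white _ _ => true
  | _, _ => false

/-- The vertex list `L` has a `⌐`-turn (Le-turn) at the white vertex `(a,b)`:
it enters `(a,b)` by a vertical edge and leaves it by a horizontal edge. -/
def HasLeTurnAt {m n : ℕ} (L : List (V m n)) (a : Fin m) (b : Fin n) : Prop :=
  ∃ u w : V m n, List.IsInfix [u, V.white a b, w] L ∧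
    isVertV u (V.white a b) = true ∧ isHorizV (V.white a b) w = true

/-- `Γ_B^{(t)}(i,j)`: the paths from row vertex `i` to column vertex `j` with no `⌐`-turn at a
white vertex larger than the `t`-th smallest coordinate. -/
def Gamma {m n : ℕ} (B : Set (Fin m × Fin n)) (t : ℕ) (i : Fin m) (j : Fin n) :
    Set (CPath m n B) :=
  {P | P.first = V.row i ∧ P.last = V.col j ∧
    ∀ (a : Fin m) (b : Fin n), t < idx (a, b) → ¬ HasLeTurnAt P.verts a b}

/-- The generator `x_{i,j}` of `A_B^{(t)}`: the sum of the weights of all paths in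
`Γ_B^{(t)}(i,j)`. -/
def XB (m n : ℕ) (q : K) (B : Set (Fin m × Fin n)) (t : ℕ) (i : Fin m) (j : Fin n) :
    QTorus K m n q :=
  ∑ᶠ P ∈ Gamma B t i j, CPath.wt K q P

/-- The subalgebra `A_B^{(t)}` of the quantum torus. -/
def ABalg (m n : ℕ) (q : K) (B : Set (Fin m × Fin n)) (t : ℕ) : Subalgebra K (QTorus K m n q) :=
  Algebra.adjoin K (Set.range fun p : Fin m × Fin n => XB K m n q B t p.1 p.2)

/-- The localization `A_B^{(t)}[x_{r,s}^{-1}]`, realized inside the quantum torus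
(note `x_{r,s} = t_{r,s}`). -/
def ABlocAlg (m n : ℕ) (q : K) (B : Set (Fin m × Fin n)) (t : ℕ) (r : Fin m) (s : Fin n) :
    Subalgebra K (QTorus K m n q) :=
  Algebra.adjoin K
    (Set.range (fun p : Fin m × Fin n => XB K m n q B t p.1 p.2) ∪ {tqi K m n q r s})

/-- A family of paths is pairwise vertex-disjoint. -/
def SysDisjoint {m n : ℕ} {B : Set (Fin m × Fin n)} {k : ℕ} (P : Fin k → CPath m n B) : Prop :=
  ∀ a b : Fin k, a ≠ b → ∀ v ∈ (P a).verts, v ∉ (P b).verts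

/-- `Γ_B^{(t)}(I|J)`: vertex-disjoint path systems from the row vertices `I` to the column
vertices `J`. -/
def GammaSys {m n : ℕ} (B : Set (Fin m × Fin n)) (t k : ℕ) (I : Fin k → Fin m)
    (J : Fin k → Fin n) : Set (Fin k → CPath m n B) :=
  {P | (∀ a, P a ∈ Gamma B t (I a) (J a)) ∧ SysDisjoint P}

/-- The weight of a path system: the ordered product of the weights of its paths. -/
def sysWt {m n : ℕ} (q : K) {B : Set (Fin m × Fin n)} {k : ℕ} (P : Fin k → CPath m n B) :
    QTorus K m n q :=
  ((List.finRange k).map fun a => CPath.wt K q (P a)).prod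

/-- The number of inversions of a permutation of `Fin k`. -/
def inversions {k : ℕ} (σ : Equiv.Perm (Fin k)) : ℕ :=
  (Finset.univ.filter fun p : Fin k × Fin k => p.1 < p.2 ∧ σ p.2 < σ p.1).card

/-- The quantum minor `[I|J]_B^{(t)}` of `A_B^{(t)}`, as an element of the quantum torus. -/
def qminor (m n : ℕ) (q : K) (B : Set (Fin m × Fin n)) (t : ℕ) (k : ℕ)
    (I : Fin k → Fin m) (J : Fin k → Fin n) : QTorus K m n q :=
  ∑ σ : Equiv.Perm (Fin k),
    ((-q) ^ inversions σ) • ((List.finRange k).map fun a => XB K m n q B t (I a) (J (σ a))).prod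

/-! ### The algebras `R^{(t)}`, presented by generators and relations -/

def xf (m n : ℕ) (p : Fin m × Fin n) : FreeAlgebra K (Fin m × Fin n) := FreeAlgebra.ι K p

/-- The defining relations of the algebra `R^{(t)}`. -/
inductive RRel (m n : ℕ) (q : K) (t : ℕ) :
    FreeAlgebra K (Fin m × Fin n) → FreeAlgebra K (Fin m × Fin n) → Prop
  | rowRel : ∀ {i : Fin m} {j l : Fin n}, j < l →
      RRel m n q t (xf K m n (i, j) * xf K m n (i, l)) (q • (xf K m n (i, l) * xf K m n (i, j)))
  | colRel : ∀ {i k : Fin m} {j : Fin n}, i < k →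
      RRel m n q t (xf K m n (i, j) * xf K m n (k, j)) (q • (xf K m n (k, j) * xf K m n (i, j)))
  | antiDiag : ∀ {i k : Fin m} {j l : Fin n}, i < k → j < l →
      RRel m n q t (xf K m n (i, l) * xf K m n (k, j)) (xf K m n (k, j) * xf K m n (i, l))
  | diagComm : ∀ {i k : Fin m} {j l : Fin n}, i < k → j < l → t < idx (k, l) →
      RRel m n q t (xf K m n (i, j) * xf K m n (k, l)) (xf K m n (k, l) * xf K m n (i, j))
  | diagQ : ∀ {i k : Fin m} {j l : Fin n}, i < k → j < l → idx (k, l) ≤ t →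
      RRel m n q t (xf K m n (i, j) * xf K m n (k, l))
        (xf K m n (k, l) * xf K m n (i, j) + (q - q⁻¹) • (xf K m n (i, l) * xf K m n (k, j)))

/-- The algebra `R^{(t)}` (`R^{(1)}` is quantum affine space, `R^{(mn)}` is quantum matrices). -/
abbrev Rt (m n : ℕ) (q : K) (t : ℕ) := RingQuot (RRel K m n q t)

/-- The standard generator `x_{i,j}` of `R^{(t)}`. -/
def rx (m n : ℕ) (q : K) (t : ℕ) (i : Fin m) (j : Fin n) : Rt K m n q t :=
  RingQuot.mkAlgHom K (RRel K m n q t) (xf K m n (i, j))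

/-- The lexicographic term `x^M` of `R^{(t)}`. -/
def rxpow (m n : ℕ) (q : K) (t : ℕ) (M : Matrix (Fin m) (Fin n) ℕ) : Rt K m n q t :=
  ((coordList m n).map fun p => rx K m n q t p.1 p.2 ^ M p.1 p.2).prod

/-- The quantum minor `[I|J]^{(t)}` of `R^{(t)} ≅ A^{(t)}`. -/
def rminor (m n : ℕ) (q : K) (t : ℕ) (k : ℕ) (I : Fin k → Fin m) (J : Fin k → Fin n) :
    Rt K m n q t :=
  ∑ σ : Equiv.Perm (Fin k),
    ((-q) ^ inversions σ) • ((List.finRange k).map fun a => rx K m n q t (I a) (J (σ a))).prod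

/-- The diagonal subminor of the minor indexed by `(I, J)` determined by a subset `s` of the
index set. -/
def minorOfFinset (m n : ℕ) (q : K) (t : ℕ) {k : ℕ} (I : Fin k → Fin m) (J : Fin k → Fin n)
    (s : Finset (Fin k)) : Rt K m n q t :=
  rminor K m n q t s.card (fun a => ((s.orderIsoOfFin rfl a : s) : Fin k) |> I)
    (fun a => ((s.orderIsoOfFin rfl a : s) : Fin k) |> J)

/-! ### The matrix lexicographic order, lexicographic expressions, leading terms -/

/-- `M ≺ N` at the coordinate `p` (matrix lexicographic order): the entries agree at all
coordinates before `p` and `M p < N p`. -/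
def MLexLtAt {m n : ℕ} {R : Type*} [LT R] (M N : Matrix (Fin m) (Fin n) R)
    (p : Fin m × Fin n) : Prop :=
  M p.1 p.2 < N p.1 p.2 ∧ ∀ p' : Fin m × Fin n, idx p' < idx p → M p'.1 p'.2 = N p'.1 p'.2

/-- The matrix lexicographic order `M ≺ N`. -/
def MLexLt {m n : ℕ} {R : Type*} [LT R] (M N : Matrix (Fin m) (Fin n) R) : Prop :=
  ∃ p : Fin m × Fin n, MLexLtAt M N p

/-- `c` is the (unique) lexicographic expression of `a ∈ R^{(t)}`. -/
def IsLexRep (m n : ℕ) (q : K) (t : ℕ) (a : Rt K m n q t)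
    (c : Matrix (Fin m) (Fin n) ℕ →₀ K) : Prop :=
  a = c.sum fun N r => r • rxpow K m n q t N

/-- `x^M` is the leading term of `a ∈ R^{(t)}` with respect to the matrix lexicographic order. -/
def IsLeadMat (m n : ℕ) (q : K) (t : ℕ) (a : Rt K m n q t)
    (M : Matrix (Fin m) (Fin n) ℕ) : Prop :=
  ∃ c, IsLexRep K m n q t a c ∧ M ∈ c.support ∧ ∀ L ∈ c.support, L ≠ M → MLexLt L M

/-- The permutation matrix `P_σ` associated to index sets `(I, J)` and a permutation `σ`. -/
def permMat {m n k : ℕ} (I : Fin k → Fin m) (J : Fin k → Fin n) (σ : Equiv.Perm (Fin k)) :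
    Matrix (Fin m) (Fin n) ℕ :=
  fun i j => (Finset.univ.filter fun a : Fin k => I a = i ∧ J (σ a) = j).card

/-- The elementary matrix `E_{i,j}`. -/
def Emat {m n : ℕ} (i : Fin m) (j : Fin n) : Matrix (Fin m) (Fin n) ℕ :=
  fun i' j' => if i' = i ∧ j' = j then 1 else 0

/-- The lexicographic term `x^N` formed from the generators of `A_B^{(t)}` in the
quantum torus. -/
def xTermQ (m n : ℕ) (q : K) (B : Set (Fin m × Fin n)) (t : ℕ)
    (N : Matrix (Fin m) (Fin n) ℕ) : QTorus K m n q :=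
  ((coordList m n).map fun p => XB K m n q B t p.1 p.2 ^ N p.1 p.2).prod

/-- `c` is the lexicographic expression of `a` in terms of the generators of `A_B^{(t)}`. -/
def IsXRep (m n : ℕ) (q : K) (B : Set (Fin m × Fin n)) (t : ℕ) (a : QTorus K m n q)
    (c : Matrix (Fin m) (Fin n) ℕ →₀ K) : Prop :=
  a = c.sum fun N r => r • xTermQ K m n q B t N

/-- The lexicographic term `y^N` of the localization `A_B^{(t')}[y_{r,s}^{-1}]`, where the
`(r,s)` entry of `N` may be negative. -/
def LocTerm (m n : ℕ) (q : K) (B : Set (Fin m × Fin n)) (t' : ℕ) (r : Fin m) (s : Fin n)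
    (N : Matrix (Fin m) (Fin n) ℤ) : QTorus K m n q :=
  ((coordList m n).map fun p =>
    if p = (r, s) then
      (if 0 ≤ N r s then XB K m n q B t' r s ^ (N r s).toNat
        else tqi K m n q r s ^ (-(N r s)).toNat)
    else XB K m n q B t' p.1 p.2 ^ (N p.1 p.2).toNat).prod

/-- `c` is the lexicographic expression of `a` in the localization `A_B^{(t')}[y_{r,s}^{-1}]`. -/
def IsLocRep (m n : ℕ) (q : K) (B : Set (Fin m × Fin n)) (t' : ℕ) (r : Fin m) (s : Fin n)
    (a : QTorus K m n q) (c : Matrix (Fin m) (Fin n) ℤ →₀ K) : Prop :=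
  (∀ N ∈ c.support, ∀ p : Fin m × Fin n, p ≠ (r, s) → 0 ≤ N p.1 p.2) ∧
  a = c.sum fun N α => α • LocTerm K m n q B t' r s N

/-! ### The path `U(P,Q)` -/

/-- Auxiliary function computing the vertex list of `U(P,Q)`: between consecutive common
vertices of `P` and `Q`, follow whichever subpath is above the other. -/
def upperAux {m n : ℕ} : ℕ → List (V m n) → List (V m n) → List (V m n)
  | 0, _, _ => []
  | _ + 1, [], _ => []
  | _ + 1, _, [] => []
  | fuel + 1, p :: ps, q :: qs =>
    match ps.filter (fun v => qs.contains v) with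
    | [] => [p]
    | v :: _ =>
      (if isHorizV p (ps.headD p) then p :: ps.takeWhile (fun x => x != v)
        else q :: qs.takeWhile (fun x => x != v)) ++
        upperAux fuel (ps.dropWhile fun x => x != v) (qs.dropWhile fun x => x != v)

/-- The vertex list of the path `U(P,Q)`. -/
def upperList {m n : ℕ} {B : Set (Fin m × Fin n)} (P Q : CPath m n B) : List (V m n) :=
  upperAux (P.verts.length + Q.verts.length) P.verts Q.verts

end QM

/-!
Place the vertices at lattice points (`pos`). Every edge becomes an axis-parallel segment whose
interior points are black squares, and the Cauchon condition forbids a horizontal and a vertical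
segment from crossing on a black square; so two edges whose segments meet coincide or share an
endpoint. Hence a path `R` from a lower row vertex that avoids `S ∈ {P, Q}` stays weakly below
and to the right of the curve of `S`. On the other hand, wherever `U(P,Q)` leaves a vertex of `S`
other than along `S`, it goes horizontally while `S` goes down; so `U(P,Q)` never gets below
the curve of `S`, and it can touch that curve only at vertices of `S`.
-/

namespace List

variable {α : Type*} {R S : α → α → Prop} {l : List α} {a x y v : α}

theorem IsChain.and (h₁ : l.IsChain R) (h₂ : l.IsChain S) :
    l.IsChain fun a b => R a b ∧ S a b := by
  rw [isChain_iff_forall_rel_of_append_cons_cons] at *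
  exact fun _ _ _ _ h => ⟨h₁ h, h₂ h⟩

theorem isChain_append_singleton_of_forall (h : ∀ a ∈ l, ∀ b, R a b) :
    (l ++ [v]).IsChain R := by
  induction l with
  | nil => exact .singleton v
  | cons a l ih =>
    rw [cons_append, isChain_cons]
    exact ⟨fun b _ => h a mem_cons_self b, ih fun a ha => h a (mem_cons_of_mem _ ha)⟩

theorem IsChain.rel_of_pair_infix (hc : l.IsChain R) (h : [x, y] <:+: l) : R x y :=
  isChain_pair.1 (hc.infix h)

theorem pair_infix_cons_iff :
    [x, y] <:+: a :: l ↔ (a = x ∧ l.head? = some y) ∨ [x, y] <:+: l := by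
  rw [infix_cons_iff, cons_prefix_cons]
  cases l with
  | nil => simp
  | cons b l => simp [eq_comm]

end List

namespace QM

structure Consecutive {α : Type*} [LinearOrder α] (s : Set α) (a b : α) : Prop where
  left_mem : a ∈ s
  right_mem : b ∈ s
  lt : a < b
  not_mem : ∀ x, a < x → x < b → x ∉ s

namespace Consecutive

variable {α : Type*} [LinearOrder α] {s : Set α} {a b a' b' x : α}

theorem eq_or_eq_of_mem (h : Consecutive s a b) (hx : x ∈ s) (ha : a ≤ x) (hb : x ≤ b) :
    x = a ∨ x = b := by
  by_contra! hne
  exact h.not_mem x (lt_of_le_of_ne ha hne.1.symm) (lt_of_le_of_ne hb hne.2) hx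

theorem eq_of_overlap (h : Consecutive s a b) (h' : Consecutive s a' b') (h₁ : a < b')
    (h₂ : a' < b) : a = a' ∧ b = b' := by
  constructor
  · rcases lt_trichotomy a a' with hlt | heq | hlt
    · exact absurd h'.left_mem (h.not_mem a' hlt h₂)
    · exact heq
    · exact absurd h.left_mem (h'.not_mem a hlt h₁)
  · rcases lt_trichotomy b b' with hlt | heq | hlt
    · exact absurd h.right_mem (h'.not_mem b h₂ hlt)
    · exact heq
    · exact absurd h'.right_mem (h.not_mem b' h₁ hlt)

theorem eq_of_not_mem (h : Consecutive s a b) (h' : Consecutive s a' b') (hx : x ∉ s)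
    (ha : a ≤ x) (hb : x ≤ b) (ha' : a' ≤ x) (hb' : x ≤ b') : a = a' ∧ b = b' := by
  have hlt {c d} (hc : c ∈ s) (hcd : c ≤ d) (hd : d ∉ s) : c < d :=
    hcd.lt_of_ne (ne_of_mem_of_not_mem hc hd)
  have hgt {c d} (hc : c ∈ s) (hcd : d ≤ c) (hd : d ∉ s) : d < c :=
    hcd.lt_of_ne (ne_of_mem_of_not_mem hc hd).symm
  exact h.eq_of_overlap h' ((hlt h.left_mem ha hx).trans (hgt h'.right_mem hb' hx))
    ((hlt h'.left_mem ha' hx).trans (hgt h.right_mem hb hx))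

end Consecutive

section Geometry

variable {m n : ℕ} {B : Set (Fin m × Fin n)}

/-- Row vertices sit in column `n`, column vertices in row `m`. -/
def pos : V m n → ℕ × ℕ
  | V.white a b => (a, b)
  | V.row a => (a, n)
  | V.col b => (m, b)

theorem pos_injective : Function.Injective (pos : V m n → ℕ × ℕ) := by
  intro u v h
  cases u <;> cases v <;> simp_all [pos, Fin.ext_iff] <;> omega

theorem pos_fst_le (v : V m n) : (pos v).1 ≤ m := by
  cases v <;> simp [pos]

theorem pos_snd_le (v : V m n) : (pos v).2 ≤ n := by
  cases v <;> simp [pos]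

/-- Points outside the grid, such as those of row and column vertices, are never black. -/
def IsBlack (B : Set (Fin m × Fin n)) (z : ℕ × ℕ) : Prop :=
  ∃ (h₁ : z.1 < m) (h₂ : z.2 < n), (⟨z.1, h₁⟩, ⟨z.2, h₂⟩) ∈ B

theorem isBlack_mk {r : Fin m} {c : Fin n} : IsBlack B (r, c) ↔ (r, c) ∈ B :=
  ⟨fun ⟨_, _, h⟩ => h, fun h => ⟨r.2, c.2, h⟩⟩

theorem not_isBlack_of_snd {z : ℕ × ℕ} (h : n ≤ z.2) : ¬ IsBlack B z :=
  fun ⟨_, h₂, _⟩ => by omega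

theorem not_isBlack_of_fst {z : ℕ × ℕ} (h : m ≤ z.1) : ¬ IsBlack B z :=
  fun ⟨h₁, _, _⟩ => by omega

theorem IsCauchon.not_cross (hB : IsCauchon B) {z : ℕ × ℕ} {r c : ℕ} (hz : IsBlack B z)
    (hc : c < z.2) (hr : r < z.1) (hrow : ¬ IsBlack B (z.1, c)) (hcol : ¬ IsBlack B (r, z.2)) :
    False := by
  obtain ⟨h₁, h₂, hz⟩ := hz
  rcases hB _ hz with h | h
  · exact hrow ⟨h₁, hc.trans h₂, h ⟨c, hc.trans h₂⟩ hc⟩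
  · exact hcol ⟨hr.trans h₁, h₂, h ⟨r, hr.trans h₁⟩ hr⟩

def HorizSeg (B : Set (Fin m × Fin n)) (u v : V m n) : Prop :=
  (pos u).1 = (pos v).1 ∧ Consecutive {c | ¬ IsBlack B ((pos u).1, c)} (pos v).2 (pos u).2

def VertSeg (B : Set (Fin m × Fin n)) (u v : V m n) : Prop :=
  (pos u).2 = (pos v).2 ∧ Consecutive {r | ¬ IsBlack B (r, (pos u).2)} (pos u).1 (pos v).1

theorem Edge.horizSeg_or_vertSeg {u v : V m n} (e : Edge B u v) :
    HorizSeg B u v ∨ VertSeg B u v := by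
  cases e with
  | horiz hlt hb hb' hbet =>
    refine Or.inl ⟨rfl, isBlack_mk.not.2 hb', isBlack_mk.not.2 hb, hlt, fun c h₁ h₂ hc => ?_⟩
    exact hc ⟨Fin.is_lt _, h₂.trans (Fin.is_lt _), hbet ⟨c, h₂.trans (Fin.is_lt _)⟩ h₁ h₂⟩
  | vert hlt hb hb' hbet =>
    refine Or.inr ⟨rfl, isBlack_mk.not.2 hb, isBlack_mk.not.2 hb', hlt, fun r h₁ h₂ hr => ?_⟩
    exact hr ⟨h₂.trans (Fin.is_lt _), Fin.is_lt _, hbet ⟨r, h₂.trans (Fin.is_lt _)⟩ h₁ h₂⟩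
  | fromRow hb hbl =>
    refine Or.inl ⟨rfl, isBlack_mk.not.2 hb, not_isBlack_of_snd le_rfl, Fin.is_lt _,
      fun c h₁ h₂ hc => ?_⟩
    exact hc ⟨Fin.is_lt _, h₂, hbl ⟨c, h₂⟩ h₁⟩
  | toCol hb hbl =>
    refine Or.inr ⟨rfl, isBlack_mk.not.2 hb, not_isBlack_of_fst le_rfl, Fin.is_lt _,
      fun r h₁ h₂ hr => ?_⟩
    exact hr ⟨h₂, Fin.is_lt _, hbl ⟨r, h₂⟩ h₁⟩

variable {u v w a b a' b' : V m n} {z : ℕ × ℕ}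

theorem HorizSeg.eq (h : HorizSeg B u v) (h' : HorizSeg B u w) : v = w :=
  pos_injective <| Prod.ext (h.1.symm.trans h'.1) (h.2.eq_of_overlap (h.1 ▸ h'.2) h.2.lt h'.2.lt).1

theorem VertSeg.eq (h : VertSeg B u v) (h' : VertSeg B u w) : v = w :=
  pos_injective <| Prod.ext (h.2.eq_of_overlap (h.1 ▸ h'.2) h'.2.lt h.2.lt).2 (h.1.symm.trans h'.1)

theorem Edge.fst_le (e : Edge B u v) : (pos u).1 ≤ (pos v).1 := by
  rcases e.horizSeg_or_vertSeg with h | h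
  exacts [h.1.le, h.2.lt.le]

theorem Edge.snd_le (e : Edge B u v) : (pos v).2 ≤ (pos u).2 := by
  rcases e.horizSeg_or_vertSeg with h | h
  exacts [h.2.lt.le, h.1.ge]

theorem Edge.not_isBlack_left (e : Edge B u v) : ¬ IsBlack B (pos u) := by
  rcases e.horizSeg_or_vertSeg with h | h
  exacts [h.2.right_mem, h.2.left_mem]

theorem Edge.not_isBlack_right (e : Edge B u v) : ¬ IsBlack B (pos v) := by
  rcases e.horizSeg_or_vertSeg with h | h
  · simpa [h.1] using h.2.left_mem
  · simpa [h.1] using h.2.right_mem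

theorem Edge.isHorizV_eq_true_iff (e : Edge B u v) :
    isHorizV u v = true ↔ (pos u).1 = (pos v).1 := by
  cases e with
  | vert hlt => simp [isHorizV, pos, Fin.val_inj, hlt.ne]
  | @toCol i => simp [isHorizV, pos, (Fin.is_lt i).ne]
  | _ => simp [isHorizV, pos]

theorem Edge.horizSeg_of_isHorizV (e : Edge B u v) (h : isHorizV u v = true) :
    HorizSeg B u v :=
  e.horizSeg_or_vertSeg.resolve_right fun hv => hv.2.lt.ne (e.isHorizV_eq_true_iff.1 h)

theorem Edge.vertSeg_of_not_isHorizV (e : Edge B u v) (h : ¬ isHorizV u v = true) :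
    VertSeg B u v :=
  e.horizSeg_or_vertSeg.resolve_left fun hh => h (e.isHorizV_eq_true_iff.2 hh.1)

/-- For an edge `u → v` one side of this box is degenerate: it is the segment of the edge. -/
def seg (u v : V m n) : Set (ℕ × ℕ) :=
  {z | (pos u).1 ≤ z.1 ∧ z.1 ≤ (pos v).1 ∧ (pos v).2 ≤ z.2 ∧ z.2 ≤ (pos u).2}

theorem Edge.left_mem_seg (e : Edge B u v) : pos u ∈ seg u v :=
  ⟨le_rfl, e.fst_le, e.snd_le, le_rfl⟩

theorem Edge.right_mem_seg (e : Edge B u v) : pos v ∈ seg u v :=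
  ⟨e.fst_le, le_rfl, le_rfl, e.snd_le⟩

theorem Edge.eq_or_eq_of_mem_seg (e : Edge B u v) (hz : z ∈ seg u v) (hzb : ¬ IsBlack B z) :
    z = pos u ∨ z = pos v := by
  obtain ⟨h₁, h₂, h₃, h₄⟩ := hz
  rcases e.horizSeg_or_vertSeg with ⟨hr, hc⟩ | ⟨hc, hr⟩
  · have hz₁ : z.1 = (pos u).1 := by omega
    rcases hc.eq_or_eq_of_mem (x := z.2) (by rwa [← hz₁]) h₃ h₄ with h | h
    · exact Or.inr (Prod.ext (by omega) h)
    · exact Or.inl (Prod.ext hz₁ h)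
  · have hz₂ : z.2 = (pos u).2 := by omega
    rcases hr.eq_or_eq_of_mem (x := z.1) (by rwa [← hz₂]) h₁ h₂ with h | h
    · exact Or.inl (Prod.ext h hz₂)
    · exact Or.inr (Prod.ext h (by omega))

theorem HorizSeg.eq_of_isBlack (h : HorizSeg B a b) (h' : HorizSeg B a' b') (hz : z ∈ seg a b)
    (hz' : z ∈ seg a' b') (hzb : IsBlack B z) : a = a' ∧ b = b' := by
  obtain ⟨h₁, h₂, h₃, h₄⟩ := hz
  obtain ⟨h₁', h₂', h₃', h₄'⟩ := hz'
  have hr : (pos a).1 = z.1 := by have := h.1; omega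
  have hr' : (pos a').1 = z.1 := by have := h'.1; omega
  obtain ⟨hb, ha⟩ := (hr ▸ h.2).eq_of_not_mem (hr' ▸ h'.2) (x := z.2) (not_not_intro hzb)
    h₃ h₄ h₃' h₄'
  exact ⟨pos_injective (Prod.ext (hr.trans hr'.symm) ha),
    pos_injective (Prod.ext (by have := h.1; have := h'.1; omega) hb)⟩

theorem VertSeg.eq_of_isBlack (h : VertSeg B a b) (h' : VertSeg B a' b') (hz : z ∈ seg a b)
    (hz' : z ∈ seg a' b') (hzb : IsBlack B z) : a = a' ∧ b = b' := by
  obtain ⟨h₁, h₂, h₃, h₄⟩ := hz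
  obtain ⟨h₁', h₂', h₃', h₄'⟩ := hz'
  have hc : (pos a).2 = z.2 := by have := h.1; omega
  have hc' : (pos a').2 = z.2 := by have := h'.1; omega
  obtain ⟨ha, hb⟩ := (hc ▸ h.2).eq_of_not_mem (hc' ▸ h'.2) (x := z.1) (not_not_intro hzb)
    h₁ h₂ h₁' h₂'
  exact ⟨pos_injective (Prod.ext ha (hc.trans hc'.symm)),
    pos_injective (Prod.ext hb (by have := h.1; have := h'.1; omega))⟩

theorem HorizSeg.not_cross (hB : IsCauchon B) (h : HorizSeg B a b) (h' : VertSeg B a' b')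
    (hz : z ∈ seg a b) (hz' : z ∈ seg a' b') (hzb : IsBlack B z) : False := by
  obtain ⟨h₁, h₂, h₃, h₄⟩ := hz
  obtain ⟨h₁', h₂', h₃', h₄'⟩ := hz'
  have hr : (pos a).1 = z.1 := by have := h.1; omega
  have hc : (pos a').2 = z.2 := by have := h'.1; omega
  have hrow : ¬ IsBlack B (z.1, (pos b).2) := hr ▸ h.2.left_mem
  have hcol : ¬ IsBlack B ((pos a').1, z.2) := hc ▸ h'.2.left_mem
  refine hB.not_cross hzb (lt_of_le_of_ne h₃ ?_) (lt_of_le_of_ne h₁' ?_) hrow hcol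
  · exact fun heq => hrow (by rwa [heq])
  · exact fun heq => hcol (by rwa [heq])

theorem Edge.noncrossing (hB : IsCauchon B) (e : Edge B a b) (f : Edge B a' b')
    (hz : z ∈ seg a b) (hz' : z ∈ seg a' b') :
    (a = a' ∧ b = b') ∨ ((z = pos a ∨ z = pos b) ∧ (z = pos a' ∨ z = pos b')) := by
  by_cases hzb : IsBlack B z
  · left
    rcases e.horizSeg_or_vertSeg with h | h <;> rcases f.horizSeg_or_vertSeg with h' | h'
    · exact h.eq_of_isBlack h' hz hz' hzb
    · exact (h.not_cross hB h' hz hz' hzb).elim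
    · exact (h'.not_cross hB h hz' hz hzb).elim
    · exact h.eq_of_isBlack h' hz hz' hzb
  · exact Or.inr ⟨e.eq_or_eq_of_mem_seg hz hzb, f.eq_or_eq_of_mem_seg hz' hzb⟩

theorem not_isBlack_of_mem {l : List (V m n)} (hl : l.IsChain (Edge B))
    (hhead : ∀ a ∈ l.head?, ¬ IsBlack B (pos a)) : ∀ v ∈ l, ¬ IsBlack B (pos v) :=
  hl.induction _ _ (fun _ _ e _ => e.not_isBlack_right) fun hne => hhead _ (List.head_mem_head? hne)

end Geometry

section Curve

variable {m n : ℕ} {B : Set (Fin m × Fin n)} {u v w y a b : V m n} {l S R L : List (V m n)}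
  {z : ℕ × ℕ}

def curve : List (V m n) → Set (ℕ × ℕ)
  | u :: v :: l => seg u v ∪ curve (v :: l)
  | _ => ∅

@[simp] theorem curve_nil : curve ([] : List (V m n)) = ∅ := rfl

@[simp] theorem curve_singleton : curve [u] = ∅ := rfl

theorem seg_subset_curve (h : [u, w] <:+: l) : seg u w ⊆ curve l := by
  induction l with
  | nil => simp at h
  | cons a l ih =>
    rcases List.pair_infix_cons_iff.1 h with ⟨rfl, hl⟩ | h
    · obtain ⟨l, rfl⟩ : ∃ l', l = w :: l' := by
        cases l with
        | nil => simp at hl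
        | cons b l => exact ⟨l, by simpa using hl⟩
      exact Set.subset_union_left
    · cases l with
      | nil => simp at h
      | cons b l => exact (ih h).trans Set.subset_union_right

theorem head_le_of_mem_curve (hc : (a :: l).IsChain (Edge B)) (hz : z ∈ curve (a :: l)) :
    (pos a).1 ≤ z.1 ∧ z.2 ≤ (pos a).2 := by
  induction l generalizing a with
  | nil => simp at hz
  | cons b l ih =>
    rw [List.isChain_cons_cons] at hc
    rcases hz with ⟨h₁, -, -, h₄⟩ | hz
    · exact ⟨h₁, h₄⟩
    · have := ih hc.2 hz
      have := hc.1.fst_le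
      have := hc.1.snd_le
      omega

theorem exists_mem_curve_row (hc : l.IsChain (Edge B)) (hz : z ∈ curve l) {r : ℕ}
    (hr : z.1 ≤ r) (hlast : ∀ t ∈ l.getLast?, r ≤ (pos t).1) : ∃ c ≤ z.2, (r, c) ∈ curve l := by
  induction l generalizing z with
  | nil => simp at hz
  | cons a l ih =>
    cases l with
    | nil => simp at hz
    | cons b l =>
      rw [List.isChain_cons_cons] at hc
      rw [List.getLast?_cons_cons] at hlast
      rcases hz with hz | hz
      · by_cases hrb : r ≤ (pos b).1
        · exact ⟨z.2, le_rfl, Or.inl ⟨hz.1.trans hr, hrb, hz.2.2⟩⟩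
        · cases l with
          | nil => simp at hlast; omega
          | cons c l =>
            obtain ⟨c', hc', hmem⟩ :=
              ih hc.2 (Or.inl (List.isChain_cons_cons.1 hc.2).1.left_mem_seg) (by omega) hlast
            exact ⟨c', hc'.trans hz.2.2.1, Or.inr hmem⟩
      · obtain ⟨c', hc', hmem⟩ := ih hc.2 hz hr hlast
        exact ⟨c', hc', Or.inr hmem⟩

theorem exists_mem_curve_col (hc : l.IsChain (Edge B)) (hz : z ∈ curve l) {c : ℕ}
    (hzc : z.2 ≤ c) (hhead : ∀ a ∈ l.head?, c ≤ (pos a).2) : ∃ r ≤ z.1, (r, c) ∈ curve l := by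
  induction l with
  | nil => simp at hz
  | cons a l ih =>
    cases l with
    | nil => simp at hz
    | cons b l =>
      have hca : c ≤ (pos a).2 := hhead a rfl
      rw [List.isChain_cons_cons] at hc
      rcases hz with hz | hz
      · exact ⟨z.1, le_rfl, Or.inl ⟨hz.1, hz.2.1, hz.2.2.1.trans hzc, hca⟩⟩
      · by_cases hcb : c ≤ (pos b).2
        · obtain ⟨r, hr, hmem⟩ := ih hc.2 hz (by simpa using hcb)
          exact ⟨r, hr, Or.inr hmem⟩
        · exact ⟨(pos b).1, (head_le_of_mem_curve hc.2 hz).1,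
            Or.inl ⟨hc.1.fst_le, le_rfl, (not_le.1 hcb).le, hca⟩⟩

theorem mem_of_pos_mem_curve (hS : S.IsChain (Edge B)) (hv : ¬ IsBlack B (pos v))
    (h : pos v ∈ curve S) : v ∈ S := by
  induction S with
  | nil => simp at h
  | cons a l ih =>
    cases l with
    | nil => simp at h
    | cons b l =>
      rw [List.isChain_cons_cons] at hS
      rcases h with h | h
      · rcases hS.1.eq_or_eq_of_mem_seg h hv with h | h
        · simp [pos_injective h]
        · simp [pos_injective h]
      · exact List.mem_cons_of_mem _ (ih hS.2 h)

theorem Edge.cross_curve (hB : IsCauchon B) (hS : S.IsChain (Edge B)) (e : Edge B u w)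
    (hz : z ∈ seg u w) (hzS : z ∈ curve S) :
    [u, w] <:+: S ∨ ∃ a ∈ S, (a = u ∨ a = w) ∧ pos a = z := by
  induction S with
  | nil => simp at hzS
  | cons a l ih =>
    cases l with
    | nil => simp at hzS
    | cons b l =>
      rw [List.isChain_cons_cons] at hS
      rcases hzS with hzS | hzS
      · rcases e.noncrossing hB hS.1 hz hzS with ⟨rfl, rfl⟩ | ⟨huw, hab⟩
        · exact Or.inl ⟨[], l, rfl⟩
        · right
          obtain ⟨x, hx, rfl⟩ : ∃ x ∈ [a, b], pos x = z := by
            rcases hab with rfl | rfl <;> simp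
          refine ⟨x, List.subset_append_left [a, b] l hx, ?_, rfl⟩
          rcases huw with h | h
          exacts [Or.inl (pos_injective h), Or.inr (pos_injective h)]
      · rcases ih hS.2 hzS with h | ⟨x, hx, hxuw, hxz⟩
        · exact Or.inl (List.infix_cons h)
        · exact Or.inr ⟨x, List.mem_cons_of_mem _ hx, hxuw, hxz⟩

theorem VertSeg.snd_le_or_fst_lt (hS : S.IsChain (Edge B)) (h : [u, y] <:+: S)
    (hv : VertSeg B u y) (hz : z ∈ curve S) : (pos u).2 ≤ z.2 ∨ (pos u).1 < z.1 := by
  induction S with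
  | nil => simp at hz
  | cons a l ih =>
    cases l with
    | nil => simp at hz
    | cons b l =>
      rw [List.isChain_cons_cons] at hS
      rcases List.pair_infix_cons_iff.1 h with ⟨rfl, hb⟩ | h
      · obtain rfl : b = y := by simpa using hb
        rcases hz with hz | hz
        · exact Or.inl (hv.1 ▸ hz.2.2.1)
        · exact Or.inr (hv.2.lt.trans_le (head_le_of_mem_curve hS.2 hz).1)
      · rcases hz with hz | hz
        · have hu := head_le_of_mem_curve hS.2
            (seg_subset_curve h (hS.2.rel_of_pair_infix h).left_mem_seg)
          exact Or.inl (hu.2.trans hz.2.2.1)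
        · exact ih hS.2 h hz

theorem pos_head_mem_curve (hl : l.IsChain (Edge B)) (hhead : l.head? = some a)
    (hlast : l.getLast? = some b) (hne : a ≠ b) : pos a ∈ curve l := by
  match l, hl with
  | [c], _ => simp_all
  | c :: d :: l, hl =>
    obtain rfl : c = a := by simpa using hhead
    exact Or.inl (List.isChain_cons_cons.1 hl).1.left_mem_seg

theorem Edge.mem_upperClosure_curve (hB : IsCauchon B) (hS : S.IsChain (Edge B))
    (hlast : ∀ t ∈ S.getLast?, (pos t).1 = m) (e : Edge B u w) (hu : u ∉ S) (hw : w ∉ S)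
    (h : pos u ∈ upperClosure (curve S)) : pos w ∈ upperClosure (curve S) := by
  obtain ⟨z, hz, hzu⟩ := mem_upperClosure.1 h
  rcases e.horizSeg_or_vertSeg with ⟨hr, hc⟩ | ⟨hc, hr⟩
  · obtain ⟨c, hcz, hmem⟩ :=
      exists_mem_curve_row hS hz hzu.1 fun t ht => (pos_fst_le u).trans_eq (hlast t ht).symm
    refine mem_upperClosure.2 ⟨((pos u).1, c), hmem, hr.le, ?_⟩
    -- otherwise the step `u → w` would cross `S`
    by_contra! hlt
    rcases e.cross_curve (z := ((pos u).1, c)) hB hS ⟨le_rfl, hr.le, hlt.le, hcz.trans hzu.2⟩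
      hmem with h | ⟨a, ha, rfl | rfl, -⟩
    · exact hu (h.subset (by simp))
    · exact hu ha
    · exact hw ha
  · exact mem_upperClosure.2 ⟨z, hz, hzu.trans ⟨e.fst_le, hc.le⟩⟩

theorem mem_upperClosure_curve_of_disjoint (hB : IsCauchon B) (hS : S.IsChain (Edge B))
    (hlast : ∀ t ∈ S.getLast?, (pos t).1 = m) (hR : R.IsChain (Edge B))
    (hhead : ∀ a ∈ R.head?, pos a ∈ upperClosure (curve S)) (hd : ∀ v ∈ R, v ∉ S) :
    ∀ v ∈ R, pos v ∈ upperClosure (curve S) :=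
  (hR.imp_of_mem_imp (S := fun u w => Edge B u w ∧ u ∉ S ∧ w ∉ S)
    fun u w hu hw e => ⟨e, hd u hu, hd w hw⟩).induction _ _
    (fun _ _ h hu => h.1.mem_upperClosure_curve hB hS hlast h.2.1 h.2.2 hu)
    fun hne => hhead _ (List.head_mem_head? hne)

/-- The sense in which `U(P,Q)` lies above `S`: wherever it leaves a vertex of `S` other than
along `S`, the path `S` goes down. -/
def StepAbove (B : Set (Fin m × Fin n)) (S : List (V m n)) (u w : V m n) : Prop :=
  u ∈ S → [u, w] <:+: S ∨ ∃ y, [u, y] <:+: S ∧ VertSeg B u y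

theorem Edge.mem_curve_or_not_mem_upperClosure_of_mem_curve (hS : S.IsChain (Edge B))
    (e : Edge B u w) (hstep : StepAbove B S u w) (hu : pos u ∈ curve S) :
    pos w ∈ curve S ∨ pos w ∉ upperClosure (curve S) := by
  rcases hstep (mem_of_pos_mem_curve hS e.not_isBlack_left hu) with h | ⟨y, hy, hv⟩
  · exact Or.inl (seg_subset_curve h e.right_mem_seg)
  · rcases e.horizSeg_or_vertSeg with ⟨hr, hc⟩ | hv'
    · refine Or.inr fun h => ?_
      obtain ⟨z, hz, hzw⟩ := mem_upperClosure.1 h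
      have := hc.lt
      rcases hv.snd_le_or_fst_lt hS hy hz with h | h <;> simp only [Prod.le_def] at hzw <;> omega
    · obtain rfl := hv'.eq hv
      exact Or.inl (seg_subset_curve hy e.right_mem_seg)

theorem Edge.mem_curve_or_not_mem_upperClosure_of_not_mem (hB : IsCauchon B)
    (hS : S.IsChain (Edge B)) (hhead : ∀ a ∈ S.head?, (pos a).2 = n) (e : Edge B u w)
    (hu : pos u ∉ upperClosure (curve S)) :
    pos w ∈ curve S ∨ pos w ∉ upperClosure (curve S) := by
  refine or_iff_not_imp_right.2 fun h => ?_
  obtain ⟨z, hz, hzw⟩ := mem_upperClosure.1 (not_not.1 h)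
  rcases e.horizSeg_or_vertSeg with ⟨hr, hc⟩ | ⟨hc, hr⟩
  · exact absurd (mem_upperClosure.2 ⟨z, hz, hzw.trans ⟨hr.ge, hc.lt.le⟩⟩) hu
  · obtain ⟨r, hrz, hmem⟩ := exists_mem_curve_col hS hz (hzw.2.trans_eq hc.symm)
      fun a ha => (pos_snd_le u).trans_eq (hhead a ha).symm
    have hur : (pos u).1 < r := not_le.1 fun h => hu (mem_upperClosure.2 ⟨_, hmem, h, le_rfl⟩)
    rcases e.cross_curve (z := (r, (pos u).2)) hB hS ⟨hur.le, hrz.trans hzw.1, hc.ge, le_rfl⟩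
      hmem with h | ⟨a, ha, rfl | rfl, hpos⟩
    · exact seg_subset_curve h e.right_mem_seg
    · exact absurd (congrArg Prod.fst hpos) hur.ne
    · exact hpos ▸ hmem

theorem mem_curve_or_not_mem_upperClosure (hB : IsCauchon B) (hS : S.IsChain (Edge B))
    (hhead : ∀ a ∈ S.head?, (pos a).2 = n)
    (hL : L.IsChain fun u w => Edge B u w ∧ StepAbove B S u w)
    (hLhead : ∀ a ∈ L.head?, pos a ∈ curve S) :
    ∀ v ∈ L, pos v ∈ curve S ∨ pos v ∉ upperClosure (curve S) :=
  hL.induction _ _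
    (fun _ _ h hu => hu.elim (h.1.mem_curve_or_not_mem_upperClosure_of_mem_curve hS h.2)
      (h.1.mem_curve_or_not_mem_upperClosure_of_not_mem hB hS hhead))
    fun hne => Or.inl (hLhead _ (List.head_mem_head? hne))

end Curve

section UpperPath

variable {m n k : ℕ} {B : Set (Fin m × Fin n)} {u v w x y : V m n}
  {P Q S S' α β γ l₁ l₂ t₁ t₂ : List (V m n)}

/-- Paths run weakly down and to the left, so `stair` is monotone along them. -/
def stair (v : V m n) : ℕ × ℕᵒᵈ := ((pos v).1, OrderDual.toDual (pos v).2)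

theorem stair_injective : Function.Injective (stair : V m n → ℕ × ℕᵒᵈ) := fun _ _ h =>
  pos_injective (Prod.ext (congrArg Prod.fst h) (congrArg (OrderDual.ofDual ∘ Prod.snd) h))

theorem Edge.stair_le (e : Edge B u v) : stair u ≤ stair v := ⟨e.fst_le, e.snd_le⟩

theorem pairwise_stair_le (hl : S.IsChain (Edge B)) : S.Pairwise (stair · ≤ stair ·) :=
  List.pairwise_map.1 ((List.isChain_map stair).2 (hl.imp fun _ _ e => e.stair_le)).pairwise

theorem mem_of_mem_of_eq_append_cons (hP : P.IsChain (Edge B)) (hQ : Q.IsChain (Edge B))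
    (hPn : P.Nodup) (hPx : P = t₁ ++ x :: l₁) (hQx : Q = t₂ ++ x :: l₂) (hu : u ∈ l₁)
    (huQ : u ∈ Q) : u ∈ l₂ := by
  subst hPx hQx
  have hx : x ∉ l₁ := (List.nodup_cons.1 (List.nodup_append.1 hPn).2.1).1
  rcases List.mem_append.1 huQ with hu₂ | hu₂
  · have h₁ := (List.pairwise_append.1 (pairwise_stair_le hQ)).2.2 u hu₂ x List.mem_cons_self
    have h₂ := (List.pairwise_cons.1 (List.pairwise_append.1 (pairwise_stair_le hP)).2.1).1 u hu
    obtain rfl := stair_injective (le_antisymm h₁ h₂)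
    exact absurd hu hx
  · rcases List.mem_cons.1 hu₂ with rfl | h
    exacts [absurd hu hx, h]

theorem upperAux_succ_of_forall_not_mem (h : ∀ a ∈ l₁, a ∉ l₂) :
    upperAux (k + 1) (x :: l₁) (x :: l₂) = [x] := by
  have hfil : l₁.filter (fun v => l₂.contains v) = [] := List.filter_eq_nil_iff.2 (by simpa using h)
  simp only [upperAux, hfil]

theorem upperAux_succ_eq (hα : ∀ a ∈ α, a ∉ β ++ v :: l₂) (hβ : v ∉ β) :
    upperAux (k + 1) (x :: (α ++ v :: l₁)) (x :: (β ++ v :: l₂)) =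
      (if isHorizV x ((α ++ v :: l₁).headD x) then x :: α else x :: β) ++
        upperAux k (v :: l₁) (v :: l₂) := by
  have hfil : (α ++ v :: l₁).filter (fun a => (β ++ v :: l₂).contains a) =
      v :: l₁.filter (fun a => (β ++ v :: l₂).contains a) := by
    rw [List.filter_append, List.filter_eq_nil_iff.2 (by simpa using hα)]
    simp
  have hαv : ∀ a ∈ α, (a != v) = true := fun a ha => by
    simpa using fun h => hα a ha (by simp [h])
  have hβv : ∀ a ∈ β, (a != v) = true := fun a ha => by
    simpa using fun h : a = v => hβ (h ▸ ha)
  simp only [upperAux, hfil, List.takeWhile_append_of_pos hαv, List.takeWhile_append_of_pos hβv,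
    List.dropWhile_append_of_pos hαv, List.dropWhile_append_of_pos hβv]
  simp

theorem HorizSeg.stepAbove (h : HorizSeg B x y) (hQ : Q.IsChain (Edge B)) (hy : [x, w] <:+: Q) :
    StepAbove B Q x y := fun _ => by
  rcases (hQ.rel_of_pair_infix hy).horizSeg_or_vertSeg with h' | h'
  · exact Or.inl (h.eq h' ▸ hy)
  · exact Or.inr ⟨w, hy, h'⟩

theorem isChain_stepAbove_of_infix (hS : S.IsChain (Edge B)) (hp : x :: (γ ++ [v]) <:+: S)
    (hγ : ∀ a ∈ γ, a ∉ S') (hx : ∀ y ∈ (γ ++ [v]).head?, StepAbove B S' x y) :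
    (x :: (γ ++ [v])).IsChain fun u w => Edge B u w ∧ StepAbove B S u w ∧ StepAbove B S' u w :=
  (hS.infix hp).and <| (((List.isChain_isInfix S).infix hp).imp fun _ _ h _ => Or.inl h).and <|
    List.isChain_cons.2 ⟨hx, List.isChain_append_singleton_of_forall fun a ha _ h =>
      absurd h (hγ a ha)⟩

theorem not_mem_of_first_common (hP : P.IsChain (Edge B)) (hQ : Q.IsChain (Edge B))
    (hPn : P.Nodup) (hQn : Q.Nodup) (hPx : P = t₁ ++ x :: (α ++ v :: l₁))
    (hQx : Q = t₂ ++ x :: (β ++ v :: l₂)) (hα : ∀ a ∈ α, a ∉ β ++ v :: l₂) :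
    v ∉ β ∧ (∀ a ∈ α, a ∉ Q) ∧ ∀ b ∈ β, b ∉ P := by
  have hPv : P = (t₁ ++ x :: α) ++ v :: l₁ := by simp [hPx]
  have hQv : Q = (t₂ ++ x :: β) ++ v :: l₂ := by simp [hQx]
  have hQd := (List.nodup_append.1 (hQv ▸ hQn)).2.2
  have hvβ : v ∉ β := fun h => hQd v (by simp [h]) v List.mem_cons_self rfl
  refine ⟨hvβ, fun a ha haQ => ?_, fun b hb hbP => ?_⟩
  · exact hα a ha (mem_of_mem_of_eq_append_cons hP hQ hPn hPx hQx (by simp [ha]) haQ)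
  rcases List.mem_append.1
      (mem_of_mem_of_eq_append_cons hQ hP hQn hQx hPx (by simp [hb]) hbP) with hbα | hbv
  · exact hα b hbα (by simp [hb])
  rcases List.mem_cons.1 hbv with rfl | hbl
  · exact hvβ hb
  · exact hQd b (by simp [hb]) b
      (List.mem_cons_of_mem _ (mem_of_mem_of_eq_append_cons hP hQ hPn hPv hQv hbl
        (by simp [hQx, hb]))) rfl

theorem isChain_upperAux_piece (hP : P.IsChain (Edge B)) (hQ : Q.IsChain (Edge B))
    (hPx : P = t₁ ++ x :: (α ++ v :: l₁)) (hQx : Q = t₂ ++ x :: (β ++ v :: l₂))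
    (hαQ : ∀ a ∈ α, a ∉ Q) (hβP : ∀ b ∈ β, b ∉ P) :
    ((if isHorizV x ((α ++ v :: l₁).headD x) then x :: α else x :: β) ++ [v]).IsChain
      fun u w => Edge B u w ∧ StepAbove B P u w ∧ StepAbove B Q u w := by
  obtain ⟨y₁, hy₁P, hy₁, hy₁D⟩ : ∃ y₁, [x, y₁] <:+: P ∧ (α ++ [v]).head? = some y₁ ∧
      (α ++ v :: l₁).headD x = y₁ := by
    cases α with
    | nil => exact ⟨v, ⟨t₁, l₁, by simp [hPx]⟩, rfl, rfl⟩
    | cons y α => exact ⟨y, ⟨t₁, α ++ v :: l₁, by simp [hPx]⟩, rfl, rfl⟩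
  obtain ⟨y₂, hy₂⟩ : ∃ y₂, [x, y₂] <:+: Q := by
    cases β with
    | nil => exact ⟨v, ⟨t₂, l₂, by simp [hQx]⟩⟩
    | cons y β => exact ⟨y, ⟨t₂, β ++ v :: l₂, by simp [hQx]⟩⟩
  have e₁ := hP.rel_of_pair_infix hy₁P
  rw [hy₁D]
  split_ifs with hdir
  · refine isChain_stepAbove_of_infix hP ⟨t₁, l₁, by simp [hPx]⟩ hαQ fun y hy => ?_
    obtain rfl := Option.mem_some_iff.1 (hy₁ ▸ hy)
    exact (e₁.horizSeg_of_isHorizV hdir).stepAbove hQ hy₂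
  · refine (isChain_stepAbove_of_infix hQ ⟨t₂, l₂, by simp [hQx]⟩ hβP fun _ _ _ =>
      Or.inr ⟨y₁, hy₁P, e₁.vertSeg_of_not_isHorizV hdir⟩).imp fun _ _ h => ⟨h.1, h.2.2, h.2.1⟩

theorem upperAux_spec (hP : P.IsChain (Edge B)) (hQ : Q.IsChain (Edge B)) (hPn : P.Nodup)
    (hQn : Q.Nodup) (k : ℕ) :
    ∀ x l₁ l₂ t₁ t₂, P = t₁ ++ x :: l₁ → Q = t₂ ++ x :: l₂ → l₁.length + l₂.length < k →
      (upperAux k (x :: l₁) (x :: l₂)).head? = some x ∧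
      (upperAux k (x :: l₁) (x :: l₂)).IsChain
        fun u w => Edge B u w ∧ StepAbove B P u w ∧ StepAbove B Q u w := by
  induction k with
  | zero => intros; omega
  | succ k ih =>
    intro x l₁ l₂ t₁ t₂ hPx hQx hk
    by_cases hcommon : ∃ a ∈ l₁, a ∈ l₂
    swap
    · simp only [not_exists, not_and] at hcommon
      rw [upperAux_succ_of_forall_not_mem hcommon]
      exact ⟨rfl, .singleton x⟩
    obtain ⟨a, ha₁, ha₂⟩ := hcommon
    -- `v` is the first vertex after `x` on `P` that is also on `Q`
    obtain ⟨v, α, l₁, hα, hv, rfl, -⟩ :=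
      List.exists_of_eraseP (p := fun a => decide (a ∈ l₂)) ha₁ (by simpa using ha₂)
    simp only [decide_eq_true_eq] at hα hv
    obtain ⟨β, l₂, rfl⟩ := List.append_of_mem hv
    obtain ⟨hvβ, hαQ, hβP⟩ := not_mem_of_first_common hP hQ hPn hQn hPx hQx hα
    obtain ⟨hhead, hrest⟩ := ih v l₁ l₂ (t₁ ++ x :: α) (t₂ ++ x :: β) (by simp [hPx])
      (by simp [hQx]) (by simp at hk; omega)
    obtain ⟨r, hr⟩ := List.head?_eq_some_iff.1 hhead
    rw [upperAux_succ_eq hα hvβ, hr]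
    rw [hr] at hrest
    exact ⟨by split <;> rfl,
      List.isChain_split.2 ⟨isChain_upperAux_piece hP hQ hPx hQx hαQ hβP, hrest⟩⟩

end UpperPath

section Paths

variable {m n : ℕ} {B : Set (Fin m × Fin n)}

theorem CPath.head?_verts (P : CPath m n B) : P.verts.head? = some P.first :=
  List.head?_eq_some_head P.nonempty

theorem CPath.getLast?_verts (P : CPath m n B) : P.verts.getLast? = some P.last :=
  List.getLast?_eq_some_getLast P.nonempty

theorem upperList_spec {P Q : CPath m n B} (h : P.first = Q.first) :
    (upperList P Q).head? = some P.first ∧ (upperList P Q).IsChain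
      fun u w => Edge B u w ∧ StepAbove B P.verts u w ∧ StepAbove B Q.verts u w := by
  obtain ⟨l₁, hl₁⟩ := List.head?_eq_some_iff.1 P.head?_verts
  obtain ⟨l₂, hl₂⟩ := List.head?_eq_some_iff.1 (h ▸ Q.head?_verts)
  have hU : upperList P Q =
      upperAux (P.verts.length + Q.verts.length) (P.first :: l₁) (P.first :: l₂) := by
    rw [upperList, ← hl₁, ← hl₂]
  rw [hU]
  exact upperAux_spec P.chain Q.chain P.nodup Q.nodup _ _ _ _ [] [] hl₁ hl₂
    (by simp [hl₁, hl₂]; omega)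

theorem not_mem_of_disjoint_of_stepAbove (hB : IsCauchon B) {i i' : Fin m} {j : Fin n}
    (hii' : i < i') {S R : CPath m n B} (hS1 : S.first = V.row i) (hS2 : S.last = V.col j)
    (hR1 : R.first = V.row i') (hd : ∀ v ∈ R.verts, v ∉ S.verts) {L : List (V m n)}
    (hL : L.IsChain fun u w => Edge B u w ∧ StepAbove B S.verts u w)
    (hLhead : L.head? = some (V.row i)) :
    ∀ v ∈ R.verts, v ∉ L := by
  have hShead := hS1 ▸ S.head?_verts
  have hRhead := hR1 ▸ R.head?_verts
  have hi : pos (V.row i : V m n) ∈ curve S.verts :=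
    pos_head_mem_curve S.chain hShead (hS2 ▸ S.getLast?_verts) (by simp)
  intro v hvR hvL
  have hbelow := mem_upperClosure_curve_of_disjoint hB S.chain
    (by simp [hS2 ▸ S.getLast?_verts, pos]) R.chain
    (by simpa [hRhead] using mem_upperClosure.2 ⟨_, hi, by simp [pos, hii'.le]⟩) hd v hvR
  rcases mem_curve_or_not_mem_upperClosure hB S.chain (by simp [hShead, pos]) hL
    (by simpa [hLhead] using hi) v hvL with h | h
  · refine hd v hvR (mem_of_pos_mem_curve S.chain ?_ h)
    exact not_isBlack_of_mem R.chain (by simp [hRhead, pos, not_isBlack_of_snd]) v hvR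
  · exact h hbelow

end Paths

theorem statement_10_general (m n : ℕ)
    (B : Set (Fin m × Fin n)) (hB : IsCauchon B)
    (i i' : Fin m) (j : Fin n) (hii' : i < i')
    (P Q : CPath m n B)
    (hP1 : P.first = V.row i) (hP2 : P.last = V.col j)
    (hQ1 : Q.first = V.row i) (hQ2 : Q.last = V.col j)
    (R : CPath m n B)
    (hR1 : R.first = V.row i')
    (hdisj : (∀ v ∈ R.verts, v ∉ P.verts) ∨ (∀ v ∈ R.verts, v ∉ Q.verts)) :
    ∀ v ∈ R.verts, v ∉ upperList P Q := by
  obtain ⟨hUhead, hU⟩ := upperList_spec (hP1.trans hQ1.symm)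
  rw [hP1] at hUhead
  rcases hdisj with hd | hd
  · exact not_mem_of_disjoint_of_stepAbove hB hii' hP1 hP2 hR1 hd
      (hU.imp fun _ _ h => ⟨h.1, h.2.1⟩) hUhead
  · exact not_mem_of_disjoint_of_stepAbove hB hii' hQ1 hQ2 hR1 hd
      (hU.imp fun _ _ h => ⟨h.1, h.2.2⟩) hUhead

/-- Lemma: if `R` starts at a row vertex `i' > i` and is vertex-disjoint
from `P` or from `Q` (two paths from row vertex `i` to column vertex `j`), then `R` is
vertex-disjoint from `U(P,Q)`. -/
theorem statement_10 (m n : ℕ) (hm : 2 ≤ m) (hn : 2 ≤ n)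
    (B : Set (Fin m × Fin n)) (hB : IsCauchon B)
    (i i' : Fin m) (j j' : Fin n) (hii' : i < i')
    (P Q : CPath m n B)
    (hP1 : P.first = V.row i) (hP2 : P.last = V.col j)
    (hQ1 : Q.first = V.row i) (hQ2 : Q.last = V.col j)
    (R : CPath m n B)
    (hR1 : R.first = V.row i') (hR2 : R.last = V.col j')
    (hdisj : (∀ v ∈ R.verts, v ∉ P.verts) ∨ (∀ v ∈ R.verts, v ∉ Q.verts)) :
    ∀ v ∈ R.verts, v ∉ upperList P Q :=
  statement_10_general m n B hB i i' j hii' P Q hP1 hP2 hQ1 hQ2 R hR1 hdisj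

end QM

end
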